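/- arXiv:1106.0090 — 2 statements merged into one kernel-verified Lean document; each statement's English description precedes it below -/
import Mathlib

section
/- Let X be a Hilbert space and S, T bounded operators on X with positive definite symmetric part. Suppose the joined numerical range W(S,T) = { ⟨S_ℂ w, w⟩ / ⟨T_ℂ w, w⟩ : w ∈ X^ℂ \ {0} } is contained in the open disc B_α(1) = {z ∈ ℂ : |z−1| < α} for some α ∈ (0,1). Then the spectral distance d_σ(S,T) = sup{ |log z| : z ∈ W(S,T) } satisfies d_σ(S,T) ≤ (|log(1−α)|/α) · sup{ |z−1| : z ∈ W(S,T) }. -/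
lemma key_log_bound {α : ℝ} (hα0 : 0 < α) (hα1 : α < 1) {z : ℂ} (hz : ‖z - 1‖ < α) :
    ‖Complex.log z‖ ≤ (-Real.log (1 - α) / α) * ‖z - 1‖ := by
  set w : ℂ := z - 1 with hwdef
  have hz' : z = 1 + w := by ring
  set t : ℝ := ‖w‖ with htdef
  have ht0 : 0 ≤ t := norm_nonneg _
  have htα : t < α := hz
  have hw1 : ‖w‖ < 1 := lt_trans htα hα1
  have hs : HasSum (fun n : ℕ ↦ (-1) ^ (n + 1) * w ^ n / n) (Complex.log (1 + w)) :=
    Complex.hasSum_taylorSeries_log hw1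
  have hg1 : HasSum (fun n : ℕ => α ^ (n + 1) / (n + 1)) (-Real.log (1 - α)) :=
    Real.hasSum_pow_div_log_of_abs_lt_one (by rw [abs_of_pos hα0]; exact hα1)
  have hg : HasSum (fun n : ℕ => α ^ n / (n : ℝ)) (-Real.log (1 - α)) := by
    have h1 : HasSum (fun n : ℕ => α ^ (n + 1) / ((n + 1 : ℕ) : ℝ))
        (-Real.log (1 - α) - ∑ i ∈ Finset.range 1, α ^ i / (i : ℝ)) := by
      simpa using hg1
    exact (hasSum_nat_add_iff' 1).mp h1
  have hb : HasSum (fun n : ℕ => (t / α) * (α ^ n / (n : ℝ)))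
      ((t / α) * (-Real.log (1 - α))) := hg.mul_left _
  have hle : ∀ n : ℕ, ‖(-1 : ℂ) ^ (n + 1) * w ^ n / n‖ ≤ (t / α) * (α ^ n / (n : ℝ)) := by
    intro n
    rcases n with _ | m
    · simp
    · rw [norm_div, norm_mul, norm_pow, norm_pow, norm_neg, norm_one, one_pow, one_mul,
        Complex.norm_natCast]
      have heq : t / α * (α ^ (m + 1) / ((m + 1 : ℕ) : ℝ)) = (t * α ^ m) / ((m + 1 : ℕ) : ℝ) := by
        field_simp
        ring
      rw [heq]
      have hnum : t ^ (m + 1) ≤ t * α ^ m := by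
        rw [pow_succ']
        gcongr
      exact (div_le_div_iff_of_pos_right (by positivity)).mpr hnum
  have hsn : Summable (fun n : ℕ => ‖(-1 : ℂ) ^ (n + 1) * w ^ n / n‖) :=
    Summable.of_nonneg_of_le (fun n => norm_nonneg _) hle hb.summable
  calc ‖Complex.log z‖ = ‖∑' n : ℕ, (-1 : ℂ) ^ (n + 1) * w ^ n / n‖ := by
        rw [hz', hs.tsum_eq]
    _ ≤ ∑' n : ℕ, ‖(-1 : ℂ) ^ (n + 1) * w ^ n / n‖ := norm_tsum_le_tsum_norm hsn
    _ ≤ ∑' n : ℕ, (t / α) * (α ^ n / (n : ℝ)) := Summable.tsum_le_tsum hle hsn hb.summable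
    _ = (t / α) * (-Real.log (1 - α)) := hb.tsum_eq
    _ = (-Real.log (1 - α) / α) * t := by ring

open scoped InnerProductSpace

theorem stmt7 {X : Type*} [NormedAddCommGroup X] [InnerProductSpace ℂ X]
    (S T : X →L[ℂ] X)
    (hS : ∀ w : X, w ≠ 0 → 0 < (⟪S w, w⟫_ℂ).re)
    (hT : ∀ w : X, w ≠ 0 → 0 < (⟪T w, w⟫_ℂ).re)
    (α : ℝ) (hα0 : 0 < α) (hα1 : α < 1)
    (W : Set ℂ)
    (hW : W = {z | ∃ w : X, w ≠ 0 ∧ z = ⟪S w, w⟫_ℂ / ⟪T w, w⟫_ℂ})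
    (hWball : W ⊆ Metric.ball (1 : ℂ) α) :
    sSup ((fun z => ‖Complex.log z‖) '' W) ≤
      (|Real.log (1 - α)| / α) * sSup ((fun z => ‖z - 1‖) '' W) := by
  have habs : |Real.log (1 - α)| = -Real.log (1 - α) :=
    abs_of_neg (Real.log_neg (by linarith) (by linarith))
  set K : ℝ := |Real.log (1 - α)| / α with hKdef
  have hK0 : 0 ≤ K := div_nonneg (abs_nonneg _) hα0.le
  rcases W.eq_empty_or_nonempty with hWe | ⟨z0, hz0⟩
  · rw [hWe]
    simp [Real.sSup_empty]
  · have hball : ∀ z ∈ W, ‖z - 1‖ < α := by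
      intro z hz
      have := hWball hz
      rwa [Metric.mem_ball, Complex.dist_eq] at this
    have hbdd : BddAbove ((fun z => ‖z - 1‖) '' W) := by
      refine ⟨α, ?_⟩
      rintro _ ⟨z, hz, rfl⟩
      exact le_of_lt (hball z hz)
    have hsup0 : 0 ≤ sSup ((fun z => ‖z - 1‖) '' W) :=
      le_trans (norm_nonneg _) (le_csSup hbdd ⟨z0, hz0, rfl⟩)
    apply Real.sSup_le
    · rintro _ ⟨z, hz, rfl⟩
      have h1 : ‖Complex.log z‖ ≤ K * ‖z - 1‖ := by
        rw [hKdef, habs]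
        exact key_log_bound hα0 hα1 (hball z hz)
      refine h1.trans ?_
      exact mul_le_mul_of_nonneg_left (le_csSup hbdd ⟨z, hz, rfl⟩) hK0
    · exact mul_nonneg hK0 hsup0
end

section
/- Let G and M be operators with positive definite symmetric part on a finite-dimensional real inner product space, and suppose ‖G − M‖ ≤ ε and ⟨Gu,u⟩ ≥ β‖u‖² for all u, with ε < β. Then for every nonzero complex vector w, |⟨M_ℂ w, w⟩/⟨G_ℂ w, w⟩ − 1| ≤ ε/β, i.e., the joined numerical range W(M,G) is contained in the closed disc of radius ε/β centered at 1. -/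
open scoped InnerProductSpace

lemma amgm_aux (ε p q : ℝ) (hε0 : 0 ≤ ε) : ε * (p * q) ≤ ε * ((p^2 + q^2)/2) := by
  nlinarith [mul_nonneg hε0 (sq_nonneg (p - q))]

lemma key_form_bound {E : Type*} [NormedAddCommGroup E] [InnerProductSpace ℝ E]
    (D : E →L[ℝ] E) (ε : ℝ) (hD : ‖D‖ ≤ ε) (u v : E) :
    Real.sqrt ((⟪D u, u⟫_ℝ + ⟪D v, v⟫_ℝ)^2 + (⟪D v, u⟫_ℝ - ⟪D u, v⟫_ℝ)^2)
      ≤ ε * (‖u‖^2 + ‖v‖^2) := by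
  have hε0 : 0 ≤ ε := le_trans (norm_nonneg D) hD
  set a := ⟪D u, u⟫_ℝ + ⟪D v, v⟫_ℝ with ha
  set b := ⟪D v, u⟫_ℝ - ⟪D u, v⟫_ℝ with hb
  set r := Real.sqrt (a^2 + b^2) with hr
  have hr0 : 0 ≤ r := Real.sqrt_nonneg _
  rcases eq_or_lt_of_le hr0 with h0 | hpos
  · rw [← h0]; positivity
  · have hr2 : r^2 = a^2 + b^2 := Real.sq_sqrt (by positivity)
    set c := a / r with hc
    set s := b / r with hs
    have hrne : r ≠ 0 := ne_of_gt hpos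
    have hcas : c * a + s * b = r := by
      rw [hc, hs, div_mul_eq_mul_div, div_mul_eq_mul_div, ← add_div, div_eq_iff hrne]
      nlinarith [hr2]
    set u' := c • u + s • v with hu'
    set v' := c • v - s • u with hv'
    have h1 : c * a + s * b = ⟪D u', u⟫_ℝ + ⟪D v', v⟫_ℝ := by
      simp only [hu', hv', map_add, map_sub, map_smul, inner_add_left, inner_sub_left,
        inner_smul_left, RCLike.inner_apply, conj_trivial, ha, hb]
      ring
    have hbound : ∀ x y : E, ⟪D x, y⟫_ℝ ≤ ε * (‖x‖ * ‖y‖) := by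
      intro x y
      have h2 : ⟪D x, y⟫_ℝ ≤ ‖D x‖ * ‖y‖ := real_inner_le_norm _ _
      have h3 : ‖D x‖ ≤ ‖D‖ * ‖x‖ := D.le_opNorm x
      have h4 : ‖D‖ * ‖x‖ ≤ ε * ‖x‖ := mul_le_mul_of_nonneg_right hD (norm_nonneg x)
      calc ⟪D x, y⟫_ℝ ≤ ‖D x‖ * ‖y‖ := h2
        _ ≤ (ε * ‖x‖) * ‖y‖ :=
            mul_le_mul_of_nonneg_right (h3.trans h4) (norm_nonneg y)
        _ = ε * (‖x‖ * ‖y‖) := by ring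
    have hcs : c^2 + s^2 = 1 := by
      rw [hc, hs, div_pow, div_pow, ← add_div, div_eq_one_iff_eq (pow_ne_zero 2 hrne)]
      linarith [hr2]
    have hnorms : ‖u'‖^2 + ‖v'‖^2 = ‖u‖^2 + ‖v‖^2 := by
      simp only [hu', hv']
      rw [@norm_add_sq_real, @norm_sub_sq_real]
      simp only [norm_smul, real_inner_smul_left, real_inner_smul_right, mul_pow,
        Real.norm_eq_abs, sq_abs]
      rw [real_inner_comm v u]
      nlinarith [hcs]
    have h2 := hbound u' u
    have h3 := hbound v' v
    have hfin : r ≤ ε * (‖u'‖ * ‖u‖) + ε * (‖v'‖ * ‖v‖) := by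
      rw [← hcas, h1]; linarith
    have hsum : ε * ((‖u'‖^2 + ‖u‖^2)/2) + ε * ((‖v'‖^2 + ‖v‖^2)/2) = ε * (‖u‖^2 + ‖v‖^2) := by
      linear_combination (ε/2) * hnorms
    linarith [amgm_aux ε ‖u'‖ ‖u‖ hε0, amgm_aux ε ‖v'‖ ‖v‖ hε0]

theorem stmt19 {E : Type*} [NormedAddCommGroup E] [InnerProductSpace ℝ E]
    [FiniteDimensional ℝ E]
    (G M : E →L[ℝ] E) (β ε : ℝ) (hβ : 0 < β) (hεβ : ε < β)
    (hGpos : ∀ u : E, u ≠ 0 → 0 < ⟪G u, u⟫_ℝ)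
    (hMpos : ∀ u : E, u ≠ 0 → 0 < ⟪M u, u⟫_ℝ)
    (hdiff : ‖G - M‖ ≤ ε)
    (hcoer : ∀ u : E, β * ‖u‖ ^ 2 ≤ ⟪G u, u⟫_ℝ) :
    ∀ u v : E, ¬(u = 0 ∧ v = 0) →
      ‖
        ((((⟪M u, u⟫_ℝ + ⟪M v, v⟫_ℝ : ℝ) : ℂ) +
            ((⟪M v, u⟫_ℝ - ⟪M u, v⟫_ℝ : ℝ) : ℂ) * Complex.I) /
          ((((⟪G u, u⟫_ℝ + ⟪G v, v⟫_ℝ : ℝ) : ℂ) +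
            ((⟪G v, u⟫_ℝ - ⟪G u, v⟫_ℝ : ℝ) : ℂ) * Complex.I)) - 1)‖ ≤ ε / β := by
  intro u v huv
  have hε0 : 0 ≤ ε := le_trans (norm_nonneg _) hdiff
  -- N > 0
  have hN : 0 < ‖u‖^2 + ‖v‖^2 := by
    rcases not_and_or.mp huv with h | h
    · have : 0 < ‖u‖ := norm_pos_iff.mpr h
      positivity
    · have : 0 < ‖v‖ := norm_pos_iff.mpr h
      positivity
  set N := ‖u‖^2 + ‖v‖^2 with hNN
  set z : ℂ := (((⟪M u, u⟫_ℝ + ⟪M v, v⟫_ℝ : ℝ) : ℂ) +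
      ((⟪M v, u⟫_ℝ - ⟪M u, v⟫_ℝ : ℝ) : ℂ) * Complex.I) with hz
  set w : ℂ := (((⟪G u, u⟫_ℝ + ⟪G v, v⟫_ℝ : ℝ) : ℂ) +
      ((⟪G v, u⟫_ℝ - ⟪G u, v⟫_ℝ : ℝ) : ℂ) * Complex.I) with hw
  have hwre : w.re = ⟪G u, u⟫_ℝ + ⟪G v, v⟫_ℝ := by
    simp [hw]
  have hGcoer : β * N ≤ w.re := by
    rw [hwre]
    have h1 := hcoer u
    have h2 := hcoer v
    simp only [hNN]; linarith
  have hwabs : β * N ≤ ‖w‖ :=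
    le_trans hGcoer (Complex.re_le_norm w)
  have hβN : 0 < β * N := by positivity
  have hwne : w ≠ 0 := by
    intro h
    rw [h] at hwabs
    simp at hwabs
    linarith
  -- numerator bound
  have hzw : z - w = (((⟪(M - G) u, u⟫_ℝ + ⟪(M - G) v, v⟫_ℝ : ℝ) : ℂ) +
      ((⟪(M - G) v, u⟫_ℝ - ⟪(M - G) u, v⟫_ℝ : ℝ) : ℂ) * Complex.I) := by
    simp only [hz, hw, ContinuousLinearMap.sub_apply, inner_sub_left]
    push_cast
    ring
  have hDnorm : ‖M - G‖ ≤ ε := by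
    rw [show M - G = -(G - M) by abel, norm_neg]
    exact hdiff
  have hnum : ‖z - w‖ ≤ ε * N := by
    rw [hzw, Complex.norm_def, Complex.normSq_apply]
    simp only [Complex.add_re, Complex.ofReal_re, Complex.mul_re, Complex.I_re,
      Complex.ofReal_im, Complex.I_im, Complex.add_im, Complex.mul_im]
    have := key_form_bound (M - G) ε hDnorm u v
    calc Real.sqrt _ ≤ ε * (‖u‖^2 + ‖v‖^2) := by
          refine le_trans (le_of_eq ?_) this
          congr 1
          ring
      _ = ε * N := rfl
  -- combine
  have key : ‖z / w - 1‖ = ‖z - w‖ / ‖w‖ := by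
    rw [show z / w - 1 = (z - w) / w by field_simp, norm_div]
  rw [key]
  have hwpos : 0 < ‖w‖ := lt_of_lt_of_le hβN hwabs
  calc ‖z - w‖ / ‖w‖ ≤ (ε * N) / (β * N) := by
        apply div_le_div₀ (by positivity) hnum hβN hwabs
    _ = ε / β := mul_div_mul_right ε β (ne_of_gt hN)
end
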